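/- arXiv:1710.02782 — 4 statements merged into one kernel-verified Lean document; each statement's English description precedes it below -/
import Mathlib

section
/- For all integers i ≥ 2, W_{i+1} = W_i · (2 ⊕ W_{i-1}), where · denotes concatenation. -/
/-- The morphism `phi` on the alphabet `ℕ`: `phi (2i) = (2i)(2i+1)` and `phi (2i+1) = (2i+2)`. -/
def phi (a : ℕ) : List ℕ := if a % 2 = 0 then [a, a + 1] else [a + 1]

/-- The finite ZWW words: `W n = phi^n(0)`, so `W 0 = 0`, `W 1 = 01`, `W 2 = 012`, `W 3 = 01223`. -/
def W (n : ℕ) : List ℕ := (fun w => w.flatMap phi)^[n] [0]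

/-! Shifting by an even number preserves parity, so `phi` commutes with such shifts; the
recurrence then follows by applying `phi` to both sides of the previous instance. -/

lemma phi_add_of_even {k : ℕ} (hk : Even k) (a : ℕ) :
    phi (a + k) = (phi a).map (· + k) := by
  have hpar : (a + k) % 2 = a % 2 := by
    obtain ⟨m, rfl⟩ := hk
    omega
  unfold phi
  split_ifs <;> simp_all [Nat.add_right_comm]

lemma flatMap_phi_map_add_of_even {k : ℕ} (hk : Even k) (w : List ℕ) :
    (w.map (· + k)).flatMap phi = (w.flatMap phi).map (· + k) := by
  induction w with
  | nil => rfl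
  | cons a t ih => simp [phi_add_of_even hk, ih]

lemma W_succ (n : ℕ) : W (n + 1) = (W n).flatMap phi :=
  Function.iterate_succ_apply' _ n [0]

lemma W_add_three (n : ℕ) : W (n + 3) = W (n + 2) ++ (W (n + 1)).map (· + 2) := by
  induction n with
  | zero => decide
  | succ n ih =>
    calc W (n + 4) = (W (n + 2) ++ (W (n + 1)).map (· + 2)).flatMap phi := by rw [W_succ, ih]
      _ = W (n + 3) ++ (W (n + 2)).map (· + 2) := by
        rw [List.flatMap_append, flatMap_phi_map_add_of_even even_two, ← W_succ, ← W_succ]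

/-- For all `i ≥ 2`, `W (i+1) = W i · (2 ⊕ W (i-1))`. -/
theorem zww_recurrence : ∀ i : ℕ, 2 ≤ i →
    W (i + 1) = W i ++ (W (i - 1)).map (· + 2) := by
  intro i hi
  obtain ⟨n, rfl⟩ := Nat.exists_eq_add_of_le' hi
  exact W_add_three n
end

section
/- For all i ≥ 0, the length of W_i equals the Fibonacci number f_{i+2}. -/
lemma countP_even_phi (a : ℕ) : (phi a).countP (· % 2 = 0) = 1 := by
  by_cases h : a % 2 = 0 <;> simp [phi, List.countP_cons, h] <;> omega

lemma length_flatMap_phi (w : List ℕ) :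
    (w.flatMap phi).length = w.length + w.countP (· % 2 = 0) := by
  induction w with
  | nil => rfl
  | cons a w ih =>
    simp only [List.flatMap_cons, List.length_append, List.length_cons, List.countP_cons, ih]
    by_cases h : a % 2 = 0 <;> simp [phi, h] <;> omega

lemma countP_even_flatMap_phi (w : List ℕ) :
    (w.flatMap phi).countP (· % 2 = 0) = w.length := by
  simp [List.countP_flatMap, Function.comp_def, countP_even_phi]

lemma length_W_and_countP_even (n : ℕ) :
    (W n).length = Nat.fib (n + 2) ∧ (W n).countP (· % 2 = 0) = Nat.fib (n + 1) := by
  induction n with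
  | zero => exact ⟨rfl, rfl⟩
  | succ n ih =>
    rw [W_succ, length_flatMap_phi, countP_even_flatMap_phi, ih.1, ih.2,
      Nat.fib_add_two (n := n + 1)]
    exact ⟨add_comm _ _, rfl⟩

/-- For all `i ≥ 0`, the length of `W i` is the Fibonacci number `f (i+2)`. -/
theorem zww_length : ∀ i : ℕ, (W i).length = Nat.fib (i + 2) :=
  fun i => (length_W_and_countP_even i).1
end

section
/- The total number of occurrences of nonempty palindromic factors in W_i (that is, the number of pairs of positions 1 ≤ j ≤ l ≤ |W_i| such that the factor W_i[j..l] is a palindrome, single-letter palindromes included) equals 1, 2, 3, 6 for i = 0, 1, 2, 3 respectively, and equals f_{i+3} - 2·f_{i-2} for all i > 3. -/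
/-- The total number of occurrences of nonempty palindromic factors in a word `w`:
the number of pairs of (0-indexed) positions `j ≤ l < |w|` such that the factor
`w[j..l]` is a palindrome. -/
def palOcc (w : List ℕ) : ℕ :=
  ((Finset.range w.length ×ˢ Finset.range w.length).filter
    (fun p => p.1 ≤ p.2 ∧
      ((w.drop p.1).take (p.2 - p.1 + 1)).reverse = (w.drop p.1).take (p.2 - p.1 + 1))).card

lemma phi_add_two (a : ℕ) : phi (a + 2) = (phi a).map (· + 2) := by
  unfold phi
  rw [show (a + 2) % 2 = a % 2 by omega]
  split <;> simp

lemma flatMap_phi_map_add_two (w : List ℕ) :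
    (w.map (· + 2)).flatMap phi = (w.flatMap phi).map (· + 2) := by
  induction w with
  | nil => rfl
  | cons a w ih => simp [phi_add_two, ih]

lemma W_add_two (n : ℕ) : W (n + 2) = W (n + 1) ++ (W n).map (· + 2) := by
  induction n with
  | zero => decide
  | succ n ih =>
    rw [W_succ (n + 2), ih, List.flatMap_append, flatMap_phi_map_add_two, ← W_succ, ← W_succ,
      ih]

lemma W_head? (n : ℕ) : (W n).head? = some 0 := by
  induction n using Nat.twoStepInduction with
  | zero => rfl
  | one => rfl
  | more n _ ih => simp [W_add_two, ih]

lemma W_getLast? (n : ℕ) : (W n).getLast? = some n := by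
  induction n using Nat.twoStepInduction with
  | zero => rfl
  | one => rfl
  | more n ih _ => simp [W_add_two, List.getLast?_append, ih]

lemma isChain_W (n : ℕ) : (W n).IsChain (fun a b => b ≤ a + 1) := by
  induction n using Nat.twoStepInduction with
  | zero => simp [W]
  | one => decide
  | more n ih₀ ih₁ =>
    rw [W_add_two, List.isChain_append, List.isChain_map]
    refine ⟨ih₁, ih₀.imp fun _ _ h => by omega, ?_⟩
    simp [W_getLast?, W_head?]

section Factor

variable {α : Type*}

def factor (w : List α) (j l : ℕ) : List α := (w.drop j).take (l - j + 1)

lemma factor_infix (w : List α) (j l : ℕ) : factor w j l <:+: w :=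
  ((w.drop j).take_prefix _).isInfix.trans (w.drop_suffix j).isInfix

lemma pair_infix_factor {w : List α} {i j l : ℕ} {x y : α} (hx : w[i]? = some x)
    (hy : w[i + 1]? = some y) (hji : j ≤ i) (hil : i < l) :
    [x, y] <:+: factor w j l := by
  refine List.infix_iff_getElem?.mpr ⟨i - j, ?_, fun t ht => ?_⟩
  · have := (List.getElem?_eq_some_iff.mp hy).1
    simp only [factor, List.length_take, List.length_drop, List.length_cons, List.length_nil]
    omega
  · simp only [List.length_cons, List.length_nil] at ht
    interval_cases t
    · simp [factor, hx, show i - j < l - j + 1 by omega, show j + (i - j) = i by omega]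
    · simp [factor, hy, show 1 + (i - j) < l - j + 1 by omega,
        show j + (1 + (i - j)) = i + 1 by omega]

lemma factor_append_of_lt {u v : List α} {j l : ℕ} (hjl : j ≤ l) (hl : l < u.length) :
    factor (u ++ v) j l = factor u j l := by
  simp only [factor, List.drop_append, List.take_append, List.length_drop,
    Nat.sub_eq_zero_of_le (show l - j + 1 ≤ u.length - j by omega), List.take_zero,
    List.append_nil]

lemma factor_append_of_le {u v : List α} {j l : ℕ} (hj : u.length ≤ j) :
    factor (u ++ v) j l = factor v (j - u.length) (l - u.length) := by
  simp only [factor, List.drop_append, List.drop_eq_nil_of_le hj, List.nil_append]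
  congr 2
  omega

lemma rel_of_pair_infix_palindrome {R : α → α → Prop} {w p : List α} (hw : w.IsChain R)
    (hp : p <:+: w) (hpal : p.reverse = p) {x y : α} (hxy : [x, y] <:+: p) : R y x := by
  have hyx : [y, x] <:+: p := by simpa [hpal] using hxy.reverse
  simpa using hw.infix (hyx.trans hp)

end Factor

lemma palOcc_eq (w : List ℕ) :
    palOcc w = ((Finset.range w.length ×ˢ Finset.range w.length).filter
      fun p => p.1 ≤ p.2 ∧ (factor w p.1 p.2).reverse = factor w p.1 p.2).card := rfl

lemma palOcc_map_of_injective {f : ℕ → ℕ} (hf : Function.Injective f) (w : List ℕ) :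
    palOcc (w.map f) = palOcc w := by
  have hfactor (j l : ℕ) : factor (w.map f) j l = (factor w j l).map f := by
    simp [factor, List.map_drop, List.map_take]
  simp only [palOcc_eq, List.length_map, hfactor, ← List.map_reverse,
    (List.map_injective_iff.mpr hf).eq_iff]

lemma palOcc_append {u v : List ℕ}
    (h : ∀ j l, j < u.length → u.length ≤ l → l < u.length + v.length →
      (factor (u ++ v) j l).reverse ≠ factor (u ++ v) j l) :
    palOcc (u ++ v) = palOcc u + palOcc v := by
  rw [palOcc_eq, List.length_append,
    ← Finset.card_filter_add_card_filter_not (p := fun p => p.2 < u.length)]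
  congr 1
  · rw [palOcc_eq]
    congr 1
    ext ⟨j, l⟩
    simp only [Finset.mem_filter, Finset.mem_product, Finset.mem_range]
    constructor
    · rintro ⟨⟨-, hjl, hpal⟩, hl⟩
      rw [factor_append_of_lt hjl hl] at hpal
      exact ⟨⟨by omega, hl⟩, hjl, hpal⟩
    · rintro ⟨⟨hj, hl⟩, hjl, hpal⟩
      rw [← factor_append_of_lt (v := v) hjl hl] at hpal
      exact ⟨⟨⟨by omega, by omega⟩, hjl, hpal⟩, hl⟩
  · rw [palOcc_eq]
    set n := u.length
    have hstart {j l : ℕ} (hl : l < n + v.length) (hnl : n ≤ l)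
        (hpal : (factor (u ++ v) j l).reverse = factor (u ++ v) j l) : n ≤ j := by
      by_contra! hjn
      exact h j l hjn hnl hl hpal
    refine Finset.card_nbij' (fun p => (p.1 - n, p.2 - n)) (fun p => (p.1 + n, p.2 + n))
      ?_ ?_ ?_ ?_
    · rintro ⟨j, l⟩ hp
      simp only [Finset.mem_coe, Finset.mem_filter, Finset.mem_product, Finset.mem_range,
        not_lt] at hp ⊢
      obtain ⟨⟨⟨-, hl⟩, hjl, hpal⟩, hnl⟩ := hp
      have hnj := hstart hl hnl hpal
      rw [factor_append_of_le hnj] at hpal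
      exact ⟨⟨by omega, by omega⟩, by omega, hpal⟩
    · rintro ⟨j, l⟩ hp
      simp only [Finset.mem_coe, Finset.mem_filter, Finset.mem_product, Finset.mem_range,
        not_lt] at hp ⊢
      obtain ⟨⟨hj, hl⟩, hjl, hpal⟩ := hp
      rw [factor_append_of_le (by omega), Nat.add_sub_cancel, Nat.add_sub_cancel]
      exact ⟨⟨⟨by omega, by omega⟩, by omega, hpal⟩, by omega⟩
    · rintro ⟨j, l⟩ hp
      simp only [Finset.mem_coe, Finset.mem_filter, Finset.mem_product, Finset.mem_range,
        not_lt] at hp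
      obtain ⟨⟨⟨-, hl⟩, -, hpal⟩, hnl⟩ := hp
      have hnj := hstart hl hnl hpal
      simp only [Prod.mk.injEq]
      omega
    · rintro ⟨j, l⟩ -
      simp

lemma factor_W_add_two_not_palindrome {n j l : ℕ} (hn : 3 ≤ n) (hj : j < (W (n + 1)).length)
    (hl : (W (n + 1)).length ≤ l) :
    (factor (W (n + 2)) j l).reverse ≠ factor (W (n + 2)) j l := by
  intro hpal
  set L := (W (n + 1)).length
  have hL : 0 < L := List.length_pos_of_ne_nil (by simp [← List.head?_eq_none_iff, W_head?])
  have hlast : (W (n + 2))[L - 1]? = some (n + 1) := by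
    rw [W_add_two, List.getElem?_append_left (by omega), ← List.getLast?_eq_getElem?,
      W_getLast?]
  have hfirst : (W (n + 2))[L - 1 + 1]? = some 2 := by
    rw [W_add_two, Nat.sub_add_cancel hL, List.getElem?_append_right le_rfl, Nat.sub_self,
      List.getElem?_map, ← List.head?_eq_getElem?, W_head?]
    rfl
  have := rel_of_pair_infix_palindrome (isChain_W (n + 2)) (factor_infix _ j l) hpal
    (pair_infix_factor hlast hfirst (by omega) (by omega))
  omega

lemma palOcc_W_add_two {n : ℕ} (hn : 3 ≤ n) :
    palOcc (W (n + 2)) = palOcc (W (n + 1)) + palOcc (W n) := by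
  rw [W_add_two, palOcc_append, palOcc_map_of_injective (add_left_injective 2)]
  intro j l hj hl _
  rw [← W_add_two]
  exact factor_W_add_two_not_palindrome hn hj hl

-- Additive form, since `Nat.fib (i + 3) - 2 * Nat.fib (i - 2)` is a truncated subtraction.
lemma palOcc_W_add_four (n : ℕ) : palOcc (W (n + 4)) + 2 * Nat.fib (n + 2) = Nat.fib (n + 7) := by
  induction n using Nat.twoStepInduction with
  | zero => decide
  | one => decide
  | more n ih₀ ih₁ =>
    have hrec : palOcc (W (n + 6)) = palOcc (W (n + 5)) + palOcc (W (n + 4)) :=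
      palOcc_W_add_two (by omega)
    have hfib₂ : Nat.fib (n + 4) = Nat.fib (n + 2) + Nat.fib (n + 3) := Nat.fib_add_two
    have hfib₇ : Nat.fib (n + 9) = Nat.fib (n + 7) + Nat.fib (n + 8) := Nat.fib_add_two
    change palOcc (W (n + 5)) + 2 * Nat.fib (n + 3) = Nat.fib (n + 8) at ih₁
    change palOcc (W (n + 6)) + 2 * Nat.fib (n + 4) = Nat.fib (n + 9)
    omega

/-- The total number of palindromes in `W i` (single-letter palindromes included) is
`1, 2, 3, 6` for `i = 0, 1, 2, 3` respectively, and `f (i+3) - 2 * f (i-2)` for `i > 3`. -/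
theorem zww_total_palindromes :
    palOcc (W 0) = 1 ∧ palOcc (W 1) = 2 ∧ palOcc (W 2) = 3 ∧ palOcc (W 3) = 6 ∧
    ∀ i : ℕ, 3 < i → palOcc (W i) = Nat.fib (i + 3) - 2 * Nat.fib (i - 2) := by
  refine ⟨by decide, by decide, by decide, by decide, fun i hi => ?_⟩
  obtain ⟨n, rfl⟩ : ∃ n, i = n + 4 := ⟨i - 4, by omega⟩
  have := palOcc_W_add_four n
  rw [show n + 4 + 3 = n + 7 by rfl, show n + 4 - 2 = n + 2 by rfl]
  omega
end

section
/- Let u be a factor of W_n for some n ≥ 0 such that the first letter of u is 2 and u is unbordered (u has no border). Then u is a Lyndon word. -/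
/-- A nonempty word is Lyndon if it is lexicographically strictly less than each of its
conjugates `v ++ u` where `x = u ++ v` with `u, v` nonempty. -/
def IsLyndon (x : List ℕ) : Prop :=
  x ≠ [] ∧ ∀ u v : List ℕ, u ≠ [] → v ≠ [] → x = u ++ v → List.Lex (· < ·) x (v ++ u)

/-!
Say that a word `X` precedes its suffixes if every proper suffix `Y` of `X` is a prefix of `X`
or first differs from `X` where `X` has an even letter smaller than that of `Y`. Both
alternatives survive `Phi = flatMap phi`, since `phi a` begins with `a` for even `a` and `phi b`
begins with `b` or `b + 1`. Write `W (n + 2) = 0 1 U`, where `U` begins with `2` and has no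
letter below `2`; then `W (n + 3) = 0 1 2 (Phi U)`. A suffix of `Phi U` beginning with `2` is
`Phi s` for a suffix `s` of `U` beginning with `2`, and `2 (Phi U) = 2 2 3 ...` beats every
such `Phi s = 2 3 ...`. So by induction every suffix of `W n` beginning with `2` precedes its
suffixes.

If `u = a b` is an unbordered factor beginning with `2`, extend it to a suffix `u t` of `W n`
and compare it with its proper suffix `b t`. As `b` is not a prefix of `u`, the two words first
differ inside `b`, with the smaller letter in `u t`; hence `u < b a`.
-/

theorem List.exists_eq_append_cons_of_append_eq {α : Type*} {l t c X : List α} {x : α}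
    (h : l ++ t = c ++ x :: X) (hc : c.length < l.length) : ∃ l', l = c ++ x :: l' := by
  rcases List.append_eq_append_iff.mp h with ⟨as, rfl, -⟩ | ⟨bs, rfl, hbs⟩
  · simp at hc
  · cases bs with
    | nil => simp at hc
    | cons b bs =>
      obtain ⟨rfl, -⟩ := List.cons.inj hbs
      exact ⟨bs, rfl⟩

namespace ZWW

def Phi (w : List ℕ) : List ℕ := w.flatMap phi

@[simp] lemma Phi_cons (a : ℕ) (w : List ℕ) : Phi (a :: w) = phi a ++ Phi w :=
  List.flatMap_cons

@[simp] lemma Phi_append (x y : List ℕ) : Phi (x ++ y) = Phi x ++ Phi y :=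
  List.flatMap_append

lemma W_succ (n : ℕ) : W (n + 1) = Phi (W n) :=
  Function.iterate_succ_apply' _ _ _

lemma phi_of_even {a : ℕ} (h : Even a) : phi a = [a, a + 1] := by
  simp [phi, Nat.even_iff.mp h]

lemma phi_of_odd {a : ℕ} (h : Odd a) : phi a = [a + 1] := by
  simp [phi, Nat.odd_iff.mp h]

lemma le_of_mem_phi {a b : ℕ} (h : b ∈ phi a) : a ≤ b := by
  unfold phi at h
  split_ifs at h <;> simp at h <;> omega

lemma two_le_of_mem_Phi {w : List ℕ} (hw : ∀ a ∈ w, 2 ≤ a) : ∀ b ∈ Phi w, 2 ≤ b := by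
  intro b hb
  obtain ⟨a, ha, hb⟩ := List.mem_flatMap.mp hb
  exact (hw a ha).trans (le_of_mem_phi hb)

lemma Phi_prefix {x y : List ℕ} (h : x <+: y) : Phi x <+: Phi y := by
  obtain ⟨z, rfl⟩ := h
  exact ⟨Phi z, (Phi_append x z).symm⟩

lemma suffix_Phi_cases {V Y : List ℕ} (hV : ∀ a ∈ V, 2 ≤ a) (hY : Y <:+ Phi V) :
    Y = [] ∨ (∃ y Y', Y = y :: Y' ∧ 2 < y) ∨ ∃ s, s <:+ V ∧ s.head? = some 2 ∧ Y = Phi s := by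
  induction V with
  | nil => exact Or.inl (List.suffix_nil.mp hY)
  | cons b V ih =>
    have hb : 2 ≤ b := hV b List.mem_cons_self
    have of_tail (h : Y <:+ Phi V) :
        Y = [] ∨ (∃ y Y', Y = y :: Y' ∧ 2 < y) ∨
          ∃ s, s <:+ b :: V ∧ s.head? = some 2 ∧ Y = Phi s :=
      (ih (fun a ha => hV a (List.mem_cons_of_mem b ha)) h).imp_right <| Or.imp_right
        fun ⟨s, hs, hs2, hYs⟩ => ⟨s, hs.trans (List.suffix_cons b V), hs2, hYs⟩
    rcases Nat.even_or_odd b with he | ho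
    · rw [Phi_cons, phi_of_even he] at hY
      rcases List.suffix_cons_iff.mp hY with hY | hY
      · rcases hb.eq_or_lt with rfl | hb
        · exact Or.inr (Or.inr ⟨2 :: V, List.suffix_refl _, rfl, by simpa [phi] using hY⟩)
        · exact Or.inr (Or.inl ⟨b, _, hY, hb⟩)
      rcases List.suffix_cons_iff.mp hY with hY | hY
      · exact Or.inr (Or.inl ⟨b + 1, _, hY, by omega⟩)
      · exact of_tail hY
    · rw [Phi_cons, phi_of_odd ho] at hY
      rcases List.suffix_cons_iff.mp hY with hY | hY
      · exact Or.inr (Or.inl ⟨b + 1, _, hY, by omega⟩)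
      · exact of_tail hY

def EvenMismatchLt (X Y : List ℕ) : Prop :=
  ∃ c a b X' Y', X = c ++ a :: X' ∧ Y = c ++ b :: Y' ∧ Even a ∧ a < b

lemma EvenMismatchLt.map_Phi {X Y : List ℕ} (h : EvenMismatchLt X Y) :
    EvenMismatchLt (Phi X) (Phi Y) := by
  obtain ⟨c, a, b, X', Y', rfl, rfl, ha, hab⟩ := h
  obtain ⟨b', t, hb, hbb'⟩ : ∃ b' t, phi b = b' :: t ∧ b ≤ b' := by
    rcases Nat.even_or_odd b with hb | hb
    · exact ⟨b, [b + 1], phi_of_even hb, le_rfl⟩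
    · exact ⟨b + 1, [], phi_of_odd hb, Nat.le_succ b⟩
  exact ⟨Phi c, a, b', (a + 1) :: Phi X', t ++ Phi Y', by simp [phi_of_even ha],
    by simp [hb], ha, by omega⟩

lemma EvenMismatchLt.lex_of_not_prefix {u t b t' : List ℕ}
    (h : EvenMismatchLt (u ++ t) (b ++ t')) (hb : ¬ b <+: u) (hbu : b.length ≤ u.length)
    (a : List ℕ) : List.Lex (· < ·) u (b ++ a) := by
  obtain ⟨c, x, y, X', Y', hX, hY, -, hxy⟩ := h
  by_cases hcb : c.length < b.length
  · obtain ⟨u', rfl⟩ := List.exists_eq_append_cons_of_append_eq hX (hcb.trans_le hbu)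
    obtain ⟨b', rfl⟩ := List.exists_eq_append_cons_of_append_eq hY hcb
    simpa using List.Lex.append_left _ (List.Lex.rel hxy) c
  · have hbc : b <+: c := List.prefix_of_prefix_length_le (List.prefix_append b t')
      (hY ▸ List.prefix_append c _) (by omega)
    exact (hb (List.prefix_of_prefix_length_le (hbc.trans (hX ▸ List.prefix_append c _))
      (List.prefix_append u t) hbu)).elim

def PrecedesSuffixes (X : List ℕ) : Prop :=
  ∀ Y, Y <:+ X → Y ≠ X → Y <+: X ∨ EvenMismatchLt X Y

lemma PrecedesSuffixes.map_Phi {s : List ℕ} (hP : PrecedesSuffixes s) (hs : ∀ a ∈ s, 2 ≤ a)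
    (hs2 : s.head? = some 2) : PrecedesSuffixes (Phi s) := by
  intro Y hY hne
  obtain ⟨s', rfl⟩ := List.head?_eq_some_iff.mp hs2
  rcases suffix_Phi_cases hs hY with rfl | ⟨y, Y', rfl, hy⟩ | ⟨t, ht, -, rfl⟩
  · exact Or.inl List.nil_prefix
  · exact Or.inr ⟨[], 2, y, 3 :: Phi s', Y', by simp [phi], rfl, even_two, hy⟩
  · rcases hP t ht (fun h => hne (h ▸ rfl)) with h | h
    · exact Or.inl (Phi_prefix h)
    · exact Or.inr h.map_Phi

lemma precedesSuffixes_two_cons_Phi {U : List ℕ} (hU : ∀ a ∈ U, 2 ≤ a)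
    (hU2 : U.head? = some 2) : PrecedesSuffixes (2 :: Phi U) := by
  intro Y hY hne
  obtain ⟨U', rfl⟩ := List.head?_eq_some_iff.mp hU2
  rcases suffix_Phi_cases hU ((List.suffix_cons_iff.mp hY).resolve_left hne) with
    rfl | ⟨y, Y', rfl, hy⟩ | ⟨t, -, ht2, rfl⟩
  · exact Or.inl List.nil_prefix
  · exact Or.inr ⟨[], 2, y, Phi (2 :: U'), Y', rfl, rfl, even_two, hy⟩
  · obtain ⟨t', rfl⟩ := List.head?_eq_some_iff.mp ht2
    exact Or.inr ⟨[2], 2, 3, 3 :: Phi U', Phi t', by simp [phi], by simp [phi], even_two,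
      by norm_num⟩

def TwoSuffixesPrecede (w : List ℕ) : Prop :=
  ∀ X, X <:+ w → X.head? = some 2 → PrecedesSuffixes X

lemma twoSuffixesPrecede_nil : TwoSuffixesPrecede [] := by
  intro X hX hX2
  rw [List.suffix_nil.mp hX] at hX2
  cases hX2

lemma TwoSuffixesPrecede.cons {w : List ℕ} (hw : TwoSuffixesPrecede w) {a : ℕ} (ha : a ≠ 2) :
    TwoSuffixesPrecede (a :: w) := by
  intro X hX hX2
  rcases List.suffix_cons_iff.mp hX with rfl | hX
  · exact absurd (Option.some.inj hX2) ha
  · exact hw X hX hX2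

lemma twoSuffixesPrecede_singleton_two : TwoSuffixesPrecede [2] := by
  intro X hX hX2 Y hY hne
  obtain rfl : X = [2] := (List.suffix_cons_iff.mp hX).resolve_right fun h => by
    rw [List.suffix_nil.mp h] at hX2
    cases hX2
  rw [(List.suffix_nil.mp ((List.suffix_cons_iff.mp hY).resolve_left hne))]
  exact Or.inl List.nil_prefix

lemma TwoSuffixesPrecede.two_cons_Phi {U : List ℕ} (hP : TwoSuffixesPrecede U)
    (hU : ∀ a ∈ U, 2 ≤ a) (hU2 : U.head? = some 2) : TwoSuffixesPrecede (2 :: Phi U) := by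
  intro X hX hX2
  rcases List.suffix_cons_iff.mp hX with rfl | hX
  · exact precedesSuffixes_two_cons_Phi hU hU2
  rcases suffix_Phi_cases hU hX with rfl | ⟨y, Y', rfl, hy⟩ | ⟨s, hs, hs2, rfl⟩
  · cases hX2
  · cases Option.some.inj hX2
    omega
  · exact (hP s hs hs2).map_Phi (fun a ha => hU a (hs.subset ha)) hs2

lemma W_add_two (n : ℕ) : ∃ U, W (n + 2) = 0 :: 1 :: U ∧ U.head? = some 2 ∧
    (∀ a ∈ U, 2 ≤ a) ∧ TwoSuffixesPrecede U := by
  induction n with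
  | zero => exact ⟨[2], by decide, rfl, by simp, twoSuffixesPrecede_singleton_two⟩
  | succ n ih =>
    obtain ⟨U, hW, hU2, hU, hP⟩ := ih
    refine ⟨2 :: Phi U, ?_, rfl, ?_, hP.two_cons_Phi hU hU2⟩
    · rw [W_succ, hW]
      simp [phi]
    · simpa using two_le_of_mem_Phi hU

lemma twoSuffixesPrecede_W : ∀ n, TwoSuffixesPrecede (W n)
  | 0 => twoSuffixesPrecede_nil.cons (by decide)
  | 1 => (twoSuffixesPrecede_nil.cons (by decide)).cons (by decide)
  | n + 2 => by
    obtain ⟨U, hW, -, -, hP⟩ := W_add_two n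
    rw [hW]
    exact (hP.cons (by decide)).cons (by decide)

end ZWW

open ZWW in
/-- An unbordered factor of a ZWW word beginning with the letter `2` is a Lyndon word.
(A border of `u` is a nonempty word `v` with `|v| < |u|` that is both a prefix and a
suffix of `u`; `u` is unbordered if it has no border.) -/
theorem zww_unbordered_two_is_lyndon : ∀ n : ℕ, ∀ u : List ℕ, u <:+: W n →
    u.head? = some 2 →
    (¬ ∃ v : List ℕ, v ≠ [] ∧ v.length < u.length ∧ v <+: u ∧ v <:+ u) →
    IsLyndon u := by
  intro n u hu hu2 hunb
  obtain ⟨_, ⟨t, rfl⟩, hX⟩ := List.infix_iff_prefix_suffix.mp hu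
  refine ⟨List.ne_nil_of_mem (List.mem_of_mem_head? hu2), fun a b ha hb hab => ?_⟩
  subst hab
  have hX2 : (a ++ b ++ t).head? = some 2 := by rw [List.head?_append, hu2]; rfl
  have hb_len : b.length < (a ++ b).length := by simp [List.length_pos_iff.mpr ha]
  have hb_not_prefix : ¬ b <+: a ++ b := fun h => hunb ⟨b, hb, hb_len, h, List.suffix_append a b⟩
  have hbt_ne : b ++ t ≠ a ++ b ++ t := fun h => ha (by simpa using congrArg List.length h)
  rcases twoSuffixesPrecede_W n _ hX hX2 (b ++ t) ⟨a, by simp⟩ hbt_ne with h | h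
  · exact (hb_not_prefix (List.prefix_of_prefix_length_le ((List.prefix_append b t).trans h)
      (List.prefix_append _ t) hb_len.le)).elim
  · exact h.lex_of_not_prefix hb_not_prefix hb_len.le a
end
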